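/- Let k > 0 and define for m ∈ ℕ the finite approximation Φ_m(q) := Σ_{j=0}^{m-1} (-1)^j q^{A_j} + (-1)^m q^{A_m}/(1 + q^{k+m-1/2}), with A_j = kj + j(j-1)/2. Then the derivative of Φ_m at q = 1 equals -(2k-1)/8, independently of m. -/

import Mathlib

noncomputable def Phi (k : ℝ) (m : ℕ) (q : ℝ) : ℝ :=
  (∑ j ∈ Finset.range m, (-1 : ℝ) ^ j * q ^ (k * j + j * (j - 1) / 2 : ℝ)) +
    (-1 : ℝ) ^ m * q ^ (k * m + m * (m - 1) / 2 : ℝ) / (1 + q ^ (k + m - 1 / 2 : ℝ))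

lemma phi_expr_val (k : ℝ) : ∀ m : ℕ, 1 ≤ m →
    (∑ j ∈ Finset.range m, (-1 : ℝ) ^ j * (k * j + j * (j - 1) / 2)) +
      ((-1 : ℝ) ^ m * (k * m + m * (m - 1) / 2) * 2 -
        (-1 : ℝ) ^ m * 1 * (k + m - 1 / 2)) / 4 = -(2 * k - 1) / 8 := by
  intro m hm
  induction m with
  | zero => omega
  | succ n ih =>
    rcases Nat.eq_or_lt_of_le hm with h | h
    · simp only [← h]
      norm_num
      ring
    · have hn : 1 ≤ n := by omega
      rw [Finset.sum_range_succ]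
      rw [← ih hn]
      push_cast
      ring

lemma hasDerivAt_Phi (k : ℝ) (m : ℕ) :
    HasDerivAt (Phi k m)
      ((∑ j ∈ Finset.range m, (-1 : ℝ) ^ j * (k * j + j * (j - 1) / 2)) +
        ((-1 : ℝ) ^ m * (k * m + m * (m - 1) / 2) * 2 -
          (-1 : ℝ) ^ m * 1 * (k + m - 1 / 2)) / 4) 1 := by
  have hpow : ∀ p : ℝ, HasDerivAt (fun q : ℝ => q ^ p) p 1 := by
    intro p
    have := Real.hasDerivAt_rpow_const (x := (1 : ℝ)) (p := p) (Or.inl one_ne_zero)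
    simpa using this
  have hsum : HasDerivAt
      (fun q : ℝ => ∑ j ∈ Finset.range m, (-1 : ℝ) ^ j * q ^ (k * j + j * (j - 1) / 2 : ℝ))
      (∑ j ∈ Finset.range m, (-1 : ℝ) ^ j * (k * j + j * (j - 1) / 2)) 1 := by
    apply HasDerivAt.fun_sum
    intro j _
    exact (hpow _).const_mul _
  have hnum : HasDerivAt (fun q : ℝ => (-1 : ℝ) ^ m * q ^ (k * m + m * (m - 1) / 2 : ℝ))
      ((-1 : ℝ) ^ m * (k * m + m * (m - 1) / 2)) 1 := (hpow _).const_mul _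
  have hden : HasDerivAt (fun q : ℝ => 1 + q ^ (k + m - 1 / 2 : ℝ)) (k + m - 1 / 2) 1 :=
    (hpow _).const_add 1
  have hdenne : (1 : ℝ) + (1 : ℝ) ^ (k + m - 1 / 2 : ℝ) ≠ 0 := by
    rw [Real.one_rpow]; norm_num
  have hdiv := hnum.div hden hdenne
  have := hsum.add hdiv
  convert this using 1
  case e'_4 => rfl
  case e'_5 => rfl
  case e'_8 => rfl
  rw [Real.one_rpow, Real.one_rpow]
  ring

theorem Phi_deriv_at_one (k : ℝ) (hk : 0 < k) (m : ℕ) (hm : 1 ≤ m) :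
    deriv (Phi k m) 1 = -(2 * k - 1) / 8 := by
  rw [(hasDerivAt_Phi k m).deriv]
  exact phi_expr_val k m hm
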